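/- The restriction s⊥ of the tensor s = π_M*g_M − π_N*g_N to the normal bundle of Γ(f), evaluated in the adapted normal frame, satisfies s⊥(ξᵢ,ξⱼ) = −δᵢⱼ for 1 ≤ i ≤ n−r and s⊥(ξᵢ,ξⱼ) = −((1−λ_{i+m−n}²)/(1+λ_{i+m−n}²)) δᵢⱼ for n−r+1 ≤ i ≤ n. Consequently, if g_M − f*g_N ≥ ε g on the tangent space (ε > 0), then s⊥ ≤ −ε g⊥ on the normal space. -/

import Mathlib

open RealInnerProductSpace

noncomputable def pp {E F : Type*} [NormedAddCommGroup E] [InnerProductSpace ℝ E]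
    [NormedAddCommGroup F] [InnerProductSpace ℝ F] (x : E) (y : F) :
    WithLp 2 (E × F) :=
  (WithLp.equiv 2 (E × F)).symm (x, y)

/-- The tensor `s = π_M^* g_M - π_N^* g_N`. -/
noncomputable def sform {E F : Type*} [NormedAddCommGroup E] [InnerProductSpace ℝ E]
    [NormedAddCommGroup F] [InnerProductSpace ℝ F] (v w : WithLp 2 (E × F)) : ℝ :=
  ⟪((WithLp.equiv 2 (E × F)) v).1, ((WithLp.equiv 2 (E × F)) w).1⟫ -
    ⟪((WithLp.equiv 2 (E × F)) v).2, ((WithLp.equiv 2 (E × F)) w).2⟫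

/-! In the singular frame, `ξⱼ = (1 + tⱼ²)^{-1/2} (-tⱼ α_{k j}, βⱼ)` with `tⱼ = 0` for `j < n - r`
and `tⱼ = λ_{j+m-n}` otherwise. As the `α`'s and `β`'s are orthonormal and `k` is injective where
`t ≠ 0`, the `ξⱼ` are orthonormal and at the same time `s`-orthogonal, with
`s(ξⱼ, ξⱼ) = -(1 - tⱼ²)/(1 + tⱼ²)`. So on the normal space `s` is diagonal in an orthonormal
basis with all diagonal entries `≤ -ε`. -/

open Set

namespace LinearMap

variable {ι : Type*} [Fintype ι]

theorem apply_sum_smul_self_of_isOrthoᵢ {R M : Type*} [CommRing R] [AddCommGroup M] [Module R M]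
    {B : M →ₗ[R] M →ₗ[R] R} {v : ι → M}
    (hB : B.IsOrthoᵢ v) (c : ι → R) :
    B (∑ i, c i • v i) (∑ i, c i • v i) = ∑ i, c i ^ 2 * B (v i) (v i) := by
  simp only [map_sum, LinearMap.sum_apply, map_smul, LinearMap.smul_apply, smul_eq_mul]
  refine Finset.sum_congr rfl fun i _ => ?_
  rw [Finset.sum_eq_single i (fun j _ hji => by rw [hB hji, mul_zero])
    (by simp)]
  ring

theorem apply_self_le_of_orthonormal_of_isOrthoᵢ {V : Type*} [NormedAddCommGroup V]
    [InnerProductSpace ℝ V] {B : V →ₗ[ℝ] V →ₗ[ℝ] ℝ} {ξ : ι → V} (hξ : Orthonormal ℝ ξ)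
    (hB : B.IsOrthoᵢ ξ) {c : ℝ} (hc : ∀ i, B (ξ i) (ξ i) ≤ c) {v : V}
    (hv : v ∈ Submodule.span ℝ (Set.range ξ)) : B v v ≤ c * ‖v‖ ^ 2 := by
  obtain ⟨a, rfl⟩ := (Submodule.mem_span_range_iff_exists_fun ℝ).mp hv
  have hnorm : ‖∑ i, a i • ξ i‖ ^ 2 = ∑ i, a i ^ 2 := by
    rw [← real_inner_self_eq_norm_sq, hξ.inner_sum]
    simp only [conj_trivial, sq]
  rw [apply_sum_smul_self_of_isOrthoᵢ hB, hnorm, Finset.mul_sum]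
  exact Finset.sum_le_sum fun i _ => by
    nlinarith [mul_le_mul_of_nonneg_left (hc i) (sq_nonneg (a i))]

end LinearMap

section GraphNormal

variable {E F : Type*} [NormedAddCommGroup E] [InnerProductSpace ℝ E]
    [NormedAddCommGroup F] [InnerProductSpace ℝ F]

theorem sform_pp (x x' : E) (y y' : F) :
    sform (pp x y) (pp x' y') = ⟪x, x'⟫ - ⟪y, y'⟫ := rfl

theorem inner_pp (x x' : E) (y y' : F) :
    ⟪pp x y, pp x' y'⟫ = ⟪x, x'⟫ + ⟪y, y'⟫ := rfl

variable (E F) in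
noncomputable def sformBilin : WithLp 2 (E × F) →ₗ[ℝ] WithLp 2 (E × F) →ₗ[ℝ] ℝ :=
  LinearMap.mk₂ ℝ sform
    (fun u v w => by
      simp only [sform, WithLp.equiv_apply, WithLp.ofLp_add, Prod.fst_add, Prod.snd_add,
        inner_add_left]
      ring)
    (fun c v w => by
      simp only [sform, WithLp.equiv_apply, WithLp.ofLp_smul, Prod.smul_fst, Prod.smul_snd,
        real_inner_smul_left, smul_eq_mul, mul_sub])
    (fun u v w => by
      simp only [sform, WithLp.equiv_apply, WithLp.ofLp_add, Prod.fst_add, Prod.snd_add,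
        inner_add_right]
      ring)
    (fun c v w => by
      simp only [sform, WithLp.equiv_apply, WithLp.ofLp_smul, Prod.smul_fst, Prod.smul_snd,
        real_inner_smul_right, smul_eq_mul, mul_sub])

@[simp]
theorem sformBilin_apply (v w : WithLp 2 (E × F)) : sformBilin E F v w = sform v w := rfl

/-- Unit normal to the graph of a linear map sending the unit vector `x` to `t • y`. -/
noncomputable def graphNormal (t : ℝ) (x : E) (y : F) : WithLp 2 (E × F) :=
  (√(1 + t ^ 2))⁻¹ • pp (-(t • x)) y

theorem inner_graphNormal (t t' : ℝ) (x x' : E) (y y' : F) :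
    ⟪graphNormal t x y, graphNormal t' x' y'⟫ =
      (t * t' * ⟪x, x'⟫ + ⟪y, y'⟫) / (√(1 + t ^ 2) * √(1 + t' ^ 2)) := by
  rw [graphNormal, graphNormal, real_inner_smul_left, real_inner_smul_right, inner_pp,
    inner_neg_neg, real_inner_smul_left, real_inner_smul_right]
  field_simp

theorem sform_graphNormal (t t' : ℝ) (x x' : E) (y y' : F) :
    sform (graphNormal t x y) (graphNormal t' x' y') =
      (t * t' * ⟪x, x'⟫ - ⟪y, y'⟫) / (√(1 + t ^ 2) * √(1 + t' ^ 2)) := by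
  rw [graphNormal, graphNormal, ← sformBilin_apply, map_smul, map_smul, LinearMap.smul_apply,
    sformBilin_apply, sform_pp, inner_neg_neg, real_inner_smul_left, real_inner_smul_right,
    smul_eq_mul, smul_eq_mul]
  field_simp

theorem inner_graphNormal_self (t : ℝ) {x : E} {y : F} (hx : ‖x‖ = 1) (hy : ‖y‖ = 1) :
    ⟪graphNormal t x y, graphNormal t x y⟫ = 1 := by
  rw [inner_graphNormal, real_inner_self_eq_norm_sq, real_inner_self_eq_norm_sq, hx, hy,
    Real.mul_self_sqrt (by positivity)]
  field_simp
  ring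

theorem sform_graphNormal_self (t : ℝ) {x : E} {y : F} (hx : ‖x‖ = 1) (hy : ‖y‖ = 1) :
    sform (graphNormal t x y) (graphNormal t x y) = -((1 - t ^ 2) / (1 + t ^ 2)) := by
  rw [sform_graphNormal, real_inner_self_eq_norm_sq, real_inner_self_eq_norm_sq, hx, hy,
    Real.mul_self_sqrt (by positivity)]
  ring

variable {ι κ : Type*} {α : κ → E} {β : ι → F} {t : ι → ℝ} {k : ι → κ}

theorem mul_mul_inner_eq_zero_of_injOn (hα : Orthonormal ℝ α) (hk : InjOn k (Function.support t))
    {i j : ι} (hij : i ≠ j) : t i * t j * ⟪α (k i), α (k j)⟫ = 0 := by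
  by_cases hi : t i = 0
  · rw [hi, zero_mul, zero_mul]
  by_cases hj : t j = 0
  · rw [hj, mul_zero, zero_mul]
  rw [hα.2 fun h => hij (hk hi hj h), mul_zero]

theorem orthonormal_graphNormal (hα : Orthonormal ℝ α) (hβ : Orthonormal ℝ β)
    (hk : InjOn k (Function.support t)) :
    Orthonormal ℝ fun i => graphNormal (t i) (α (k i)) (β i) := by
  classical
  refine orthonormal_iff_ite.mpr fun i j => ?_
  split_ifs with hij
  · subst hij
    exact inner_graphNormal_self _ (hα.1 _) (hβ.1 _)
  · rw [inner_graphNormal, mul_mul_inner_eq_zero_of_injOn hα hk hij, hβ.2 hij, add_zero,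
      zero_div]

theorem sform_graphNormal_eq_ite [DecidableEq ι] (hα : Orthonormal ℝ α)
    (hβ : Orthonormal ℝ β) (hk : InjOn k (Function.support t)) (i j : ι) :
    sform (graphNormal (t i) (α (k i)) (β i)) (graphNormal (t j) (α (k j)) (β j)) =
      if i = j then -((1 - t i ^ 2) / (1 + t i ^ 2)) else 0 := by
  split_ifs with hij
  · subst hij
    exact sform_graphNormal_self _ (hα.1 _) (hβ.1 _)
  · rw [sform_graphNormal, mul_mul_inner_eq_zero_of_injOn hα hk hij, hβ.2 hij, sub_zero,
      zero_div]

end GraphNormal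

theorem one_sub_sq_div_one_add_sq_le_one (x : ℝ) : (1 - x ^ 2) / (1 + x ^ 2) ≤ 1 :=
  div_le_one_of_le₀ (by linarith [sq_nonneg x]) (by positivity)

section SingularFrame

variable {m n : ℕ} (hm : 0 < m)

def shiftIndex (j : Fin n) : Fin m := ⟨j + m - n, by omega⟩

noncomputable def frameSlope (r : ℕ) (l : Fin m → ℝ) (j : Fin n) : ℝ :=
  if (j : ℕ) < n - r then 0 else l (shiftIndex hm j)

theorem injOn_shiftIndex_support_frameSlope {r : ℕ} (hrm : r ≤ m) (l : Fin m → ℝ) :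
    InjOn (shiftIndex (n := n) hm) (Function.support (frameSlope hm r l)) := by
  intro i hi j hj hij
  have hi' : ¬(i : ℕ) < n - r := fun h => hi (if_pos h)
  have hj' : ¬(j : ℕ) < n - r := fun h => hj (if_pos h)
  have := congrArg Fin.val hij
  simp only [shiftIndex] at this
  exact Fin.ext (by omega)

theorem le_one_sub_sq_div_one_add_sq_frameSlope {r : ℕ} {l : Fin m → ℝ} {ε : ℝ}
    (hεl : ∀ i, ε ≤ (1 - l i ^ 2) / (1 + l i ^ 2)) (j : Fin n) :
    ε ≤ (1 - frameSlope hm r l j ^ 2) / (1 + frameSlope hm r l j ^ 2) := by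
  unfold frameSlope
  split_ifs
  · simpa using (hεl (shiftIndex hm j)).trans (one_sub_sq_div_one_add_sq_le_one _)
  · exact hεl _

end SingularFrame

/-- On the adapted normal frame, `s⊥(ξᵢ,ξⱼ) = -δᵢⱼ` for `i ≤ n-r` and
`s⊥(ξᵢ,ξⱼ) = -((1-λ_{i+m-n}²)/(1+λ_{i+m-n}²)) δᵢⱼ` for `i > n-r`.
Consequently, if `(1-λᵢ²)/(1+λᵢ²) ≥ ε > 0` for all `i` (i.e. `g_M - f^*g_N ≥ ε g`),
then `s⊥ ≤ -ε g⊥` on the normal space. -/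
theorem stmt_6 {E F : Type*} [NormedAddCommGroup E] [InnerProductSpace ℝ E]
    [NormedAddCommGroup F] [InnerProductSpace ℝ F] (m n r : ℕ)
    (hm : 0 < m) (hrm : r ≤ m)
    (α : Fin m → E) (β : Fin n → F)
    (hα : Orthonormal ℝ α) (hβ : Orthonormal ℝ β)
    (l : Fin m → ℝ)
    (hlz : ∀ i : Fin m, (i : ℕ) < m - r → l i = 0)
    (ξ : Fin n → WithLp 2 (E × F))
    (hξ : ∀ j : Fin n, ∀ h : n ≤ (j : ℕ) + m,
      ξ j = (Real.sqrt (1 + (l ⟨(j : ℕ) + m - n, by have := j.isLt; omega⟩) ^ 2))⁻¹ •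
        pp (-((l ⟨(j : ℕ) + m - n, by have := j.isLt; omega⟩) •
              α ⟨(j : ℕ) + m - n, by have := j.isLt; omega⟩)) (β j))
    (hξ' : ∀ j : Fin n, (j : ℕ) + m < n → ξ j = pp 0 (β j)) :
    (∀ i j : Fin n, sform (ξ i) (ξ j) =
      if i = j then
        (if h : (i : ℕ) < n - r then (-1 : ℝ)
         else -((1 - (l ⟨(i : ℕ) + m - n, by have := i.isLt; omega⟩) ^ 2) /
                 (1 + (l ⟨(i : ℕ) + m - n, by have := i.isLt; omega⟩) ^ 2)))
      else 0) ∧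
    (∀ ε : ℝ, 0 < ε → (∀ i : Fin m, ε ≤ (1 - l i ^ 2) / (1 + l i ^ 2)) →
      ∀ v ∈ Submodule.span ℝ (Set.range ξ), sform v v ≤ -ε * ‖v‖ ^ 2) := by
  set k := shiftIndex (n := n) hm
  set t := frameSlope hm r l
  have hξt : ξ = fun j => graphNormal (t j) (α (k j)) (β j) := by
    funext j
    by_cases hj : n ≤ (j : ℕ) + m
    · have htj : t j = l (k j) := by
        by_cases hjr : (j : ℕ) < n - r
        · rw [hlz (k j) (by simp only [k, shiftIndex]; omega)]
          exact if_pos hjr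
        · exact if_neg hjr
      rw [hξ j hj, htj]
      rfl
    · have htj : t j = 0 := if_pos (by omega)
      simp [hξ' j (by omega), htj, graphNormal]
  subst hξt
  have hk : InjOn k (Function.support t) := injOn_shiftIndex_support_frameSlope hm hrm l
  have hform := sform_graphNormal_eq_ite hα hβ hk
  refine ⟨fun i j => ?_, fun ε _ hεl v hv => ?_⟩
  · rw [hform]
    split_ifs with hij hir
    · simp [t, frameSlope, hir]
    · simp only [t, frameSlope, if_neg hir]
      rfl
    · rfl
  · refine (sformBilin E F).apply_self_le_of_orthonormal_of_isOrthoᵢ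
      (orthonormal_graphNormal hα hβ hk) (fun i j hij => ?_) (fun i => ?_) hv
    · simpa [hij] using hform i j
    · rw [sformBilin_apply, hform, if_pos rfl, neg_le_neg_iff]
      exact le_one_sub_sq_div_one_add_sq_frameSlope hm hεl i
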